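/- Fix M > 0. Let g : ℝ → ℝ be odd, nondecreasing, with g continuously differentiable and g satisfying min{α^λ, α^Λ} g(t) ≤ g(αt) for all α, t > 0 (for constants 1 < λ ≤ Λ). Then there exists a constant C = C_M > 0 such that for every a with |a| ≤ M and every b > 0, g(a) − g(a−b) ≤ C max{b, g(b)}. -/

import Mathlib

open Set Real

/-!
For small increments `b ≤ M` both `a - b` and `a` lie in `[-2M, M]`, where the continuous
derivative of `g` is bounded, so the mean value theorem gives `g a - g (a - b) ≤ K b`.
For large increments `b > M ≥ |a|`, monotonicity and oddness give
`g a - g (a - b) ≤ g b + g (2b)`, and the growth condition at `α = 2` bounds `g (2b)` by a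
multiple of `g b`.
-/

theorem exists_image_sub_le_mul_sub_of_continuous_deriv {f : ℝ → ℝ} (hf : Differentiable ℝ f)
    (hf' : Continuous (deriv f)) (p q : ℝ) :
    ∃ K, ∀ x ∈ Icc p q, ∀ y ∈ Icc p q, x ≤ y → f y - f x ≤ K * (y - x) := by
  obtain ⟨K, hK⟩ := (isCompact_Icc (a := p) (b := q)).bddAbove_image
    hf'.continuousOn
  exact ⟨K, (convex_Icc p q).image_sub_le_mul_sub_of_deriv_le hf.continuous.continuousOn
    hf.differentiableOn fun x hx => hK ⟨x, interior_subset hx, rfl⟩⟩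

theorem nonneg_of_odd_of_monotone {g : ℝ → ℝ} (hodd : ∀ t, g (-t) = -g t)
    (hmono : Monotone g) {b : ℝ} (hb : 0 ≤ b) : 0 ≤ g b := by
  have hg0 : g 0 = 0 := by linarith [neg_zero (G := ℝ) ▸ hodd 0]
  exact hg0 ▸ hmono hb

theorem sub_le_add_of_odd_of_monotone {g : ℝ → ℝ} (hodd : ∀ t, g (-t) = -g t)
    (hmono : Monotone g) {a b : ℝ} (ha : |a| ≤ b) :
    g a - g (a - b) ≤ g b + g (2 * b) := by
  obtain ⟨hba, hab⟩ := abs_le.1 ha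
  have hupper : g a ≤ g b := hmono hab
  have hlower : g (-(2 * b)) ≤ g (a - b) := hmono (by linarith)
  linarith [hodd (2 * b)]

theorem stmt_5_general (g : ℝ → ℝ) (lam Lam M : ℝ)
    (hodd : ∀ t : ℝ, g (-t) = - g t)
    (hmono : Monotone g) (hdiff : Differentiable ℝ g)
    (hcont : Continuous (deriv g))
    (hgrowth : ∀ α t : ℝ, 0 < α → 0 < t →
      min (α ^ lam) (α ^ Lam) * g t ≤ g (α * t) ∧
      g (α * t) ≤ max (α ^ lam) (α ^ Lam) * g t) :
    ∃ C > 0, ∀ a b : ℝ, |a| ≤ M → 0 < b →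
      g a - g (a - b) ≤ C * max b (g b) := by
  obtain ⟨K, hK⟩ := exists_image_sub_le_mul_sub_of_continuous_deriv hdiff hcont (-(2 * M)) M
  set D := max ((2 : ℝ) ^ lam) ((2 : ℝ) ^ Lam)
  have hD : 0 < D := lt_max_of_lt_left (rpow_pos_of_pos two_pos _)
  have hC : 0 < max K (1 + D) := lt_max_of_lt_right (by linarith)
  refine ⟨max K (1 + D), hC, fun a b ha hb => ?_⟩
  obtain ⟨hMa, haM⟩ := abs_le.1 ha
  rcases le_or_gt b M with hbM | hMb
  · calc g a - g (a - b) ≤ K * (a - (a - b)) :=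
          hK _ ⟨by linarith, by linarith⟩ _ ⟨by linarith, haM⟩ (by linarith)
      _ = K * b := by ring
      _ ≤ max K (1 + D) * max b (g b) :=
          mul_le_mul (le_max_left _ _) (le_max_left _ _) hb.le hC.le
  · calc g a - g (a - b) ≤ g b + g (2 * b) :=
          sub_le_add_of_odd_of_monotone hodd hmono (abs_le.2 ⟨by linarith, by linarith⟩)
      _ ≤ g b + D * g b := add_le_add_right (hgrowth 2 b two_pos hb).2 _
      _ = (1 + D) * g b := by ring
      _ ≤ max K (1 + D) * max b (g b) :=
          mul_le_mul (le_max_right _ _) (le_max_right _ _)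
            (nonneg_of_odd_of_monotone hodd hmono hb.le) hC.le

theorem stmt_5 (g : ℝ → ℝ) (lam Lam M : ℝ)
    (hlam : 1 < lam) (hlL : lam ≤ Lam) (hM : 0 < M)
    (hodd : ∀ t : ℝ, g (-t) = - g t) (hg0 : g 0 = 0)
    (hmono : Monotone g) (hdiff : Differentiable ℝ g)
    (hcont : Continuous (deriv g))
    (hgrowth : ∀ α t : ℝ, 0 < α → 0 < t →
      min (α ^ lam) (α ^ Lam) * g t ≤ g (α * t) ∧
      g (α * t) ≤ max (α ^ lam) (α ^ Lam) * g t) :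
    ∃ C > 0, ∀ a b : ℝ, |a| ≤ M → 0 < b →
      g a - g (a - b) ≤ C * max b (g b) :=
  stmt_5_general g lam Lam M hodd hmono hdiff hcont hgrowth
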